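/- Let d and g be integers with 2 ≤ g ≤ 2d. Then the product ideals J·(f) and I·(f) of ℂ[x_{ij}] have the same radical: √(J·(f)) = √(I·(f)), where (f) denotes the principal ideal generated by f. Equivalently, the ideals J·(f) and I·(f) have the same zero locus in affine space ℂ^{g×2d}. -/

import Mathlib

open MvPolynomial Matrix

/-- The map `Fin (g-1) → Fin g` skipping the index `i` (deleting the `i`-th row). -/
def rowDelete {g : ℕ} (i : Fin g) : Fin (g - 1) → Fin g :=
  fun j => if (j : ℕ) < (i : ℕ) then ⟨j, lt_of_lt_of_le j.isLt (Nat.sub_le g 1)⟩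
    else ⟨(j : ℕ) + 1, by have := j.isLt; omega⟩

/-- The generic `g × 2d` matrix `M = (x_{ij})` over `ℂ[x_{ij}]`. -/
noncomputable def genericMatrix (g d : ℕ) :
    Matrix (Fin g) (Fin (2 * d)) (MvPolynomial (Fin g × Fin (2 * d)) ℂ) :=
  fun i j => X (i, j)

/-- The ideal `I` generated by all `g × g` minors of `M`. -/
noncomputable def idealI (g d : ℕ) : Ideal (MvPolynomial (Fin g × Fin (2 * d)) ℂ) :=
  Ideal.span { p | ∃ c : Fin g → Fin (2 * d), StrictMono c ∧
    p = ((genericMatrix g d).submatrix id c).det }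

/-- The ideal `J` generated by the minors `det M_{(1,…,g-1,i)}` for `g ≤ i ≤ 2d`
(here written 0-indexed: columns `0,…,g-2` together with a column `i` with
`g - 1 ≤ i`). -/
noncomputable def idealJ (g d : ℕ) (hgd : g ≤ 2 * d) :
    Ideal (MvPolynomial (Fin g × Fin (2 * d)) ℂ) :=
  Ideal.span { p | ∃ i : Fin (2 * d), g - 1 ≤ (i : ℕ) ∧
    p = ((genericMatrix g d).submatrix id
      (fun k : Fin g => if (k : ℕ) < g - 1 then Fin.castLE hgd k else i)).det }

/-- `f` is the product of the `(g-1) × (g-1)` minors of the submatrix `N` of `M`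
consisting of the first `g - 1` columns (one minor for each deleted row). -/
noncomputable def theF (g d : ℕ) (hgd : g ≤ 2 * d) :
    MvPolynomial (Fin g × Fin (2 * d)) ℂ :=
  ∏ i : Fin g,
    ((genericMatrix g d).submatrix (rowDelete i)
      (fun j : Fin (g - 1) => Fin.castLE (le_trans (Nat.sub_le g 1) hgd) j)).det

/-!
At a point where `f` does not vanish, the row-deleted minor of the first `g - 1` columns is
nonzero, so these columns are linearly independent. If moreover all generators of `J` vanish,
every remaining column lies in their span, so the matrix has rank at most `g - 1` and all its
`g × g` minors vanish. Hence `I · f` vanishes on the zero locus of `J`, and the Nullstellensatz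
gives `I · f ⊆ √J`; together with `I · f ⊆ (f)` and `J ⊆ I` this yields the equality of
radicals.
-/

namespace Matrix

variable {K : Type*} [Field K] {l m n : Type*}

theorem linearIndependent_col_comp_of_det_submatrix_ne_zero [Fintype l] [DecidableEq l]
    (A : Matrix m n K) {r : l → m} {c : l → n} (h : (A.submatrix r c).det ≠ 0) :
    LinearIndependent K (A.col ∘ c) :=
  LinearIndependent.of_comp (LinearMap.funLeft K K r) <|
    linearIndependent_cols_iff_isUnit.2 <| (isUnit_iff_isUnit_det _).2 h.isUnit

theorem col_mem_span_of_det_submatrix_snoc_eq_zero {k : ℕ} (A : Matrix (Fin (k + 1)) n K)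
    {c : Fin k → n} (hc : LinearIndependent K (A.col ∘ c)) {j : n}
    (h : (A.submatrix id (Fin.snoc c j)).det = 0) :
    A.col j ∈ Submodule.span K (Set.range (A.col ∘ c)) := by
  by_contra hj
  have hcols : LinearIndependent K (A.submatrix id (Fin.snoc c j)).col := by
    have : (A.submatrix id (Fin.snoc c j)).col = Fin.snoc (A.col ∘ c) (A.col j) :=
      Fin.comp_snoc A.col c j
    exact this ▸ linearIndependent_finSnoc.2 ⟨hc, hj⟩
  exact (isUnit_iff_isUnit_det _).1 (linearIndependent_cols_iff_isUnit.1 hcols) |>.ne_zero h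

theorem rank_le_card_of_col_mem_span [Fintype m] [Fintype n] {ι : Type*} [Fintype ι]
    (A : Matrix m n K) {v : ι → m → K}
    (h : ∀ j, A.col j ∈ Submodule.span K (Set.range v)) :
    A.rank ≤ Fintype.card ι := by
  rw [rank_eq_finrank_span_cols]
  calc _ ≤ Module.finrank K (Submodule.span K (Set.range v)) :=
        Submodule.finrank_mono (Submodule.span_le.2 (Set.range_subset_iff.2 h))
    _ ≤ Fintype.card ι := finrank_range_le_card v

theorem det_submatrix_eq_zero_of_rank_lt [Fintype l] [DecidableEq l] [Fintype n]
    (A : Matrix m n K) (r : l → m) (c : l → n) (h : A.rank < Fintype.card l) :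
    (A.submatrix r c).det = 0 := by
  by_contra hdet
  have := rank_of_isUnit _ ((isUnit_iff_isUnit_det _).2 (Ne.isUnit hdet))
  exact (this ▸ rank_submatrix_le A r c).not_gt h

theorem det_submatrix_eq_zero_of_det_submatrix_snoc_eq_zero {k : ℕ} [Fintype n]
    (A : Matrix (Fin (k + 1)) n K) {r : Fin k → Fin (k + 1)} {c₀ : Fin k → n}
    (hr : (A.submatrix r c₀).det ≠ 0)
    (hcol : ∀ j ∉ Set.range c₀, (A.submatrix id (Fin.snoc c₀ j)).det = 0)
    (c : Fin (k + 1) → n) : (A.submatrix id c).det = 0 := by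
  have hind := A.linearIndependent_col_comp_of_det_submatrix_ne_zero hr
  have hspan : ∀ j, A.col j ∈ Submodule.span K (Set.range (A.col ∘ c₀)) := by
    intro j
    by_cases hj : j ∈ Set.range c₀
    · obtain ⟨t, rfl⟩ := hj
      exact Submodule.subset_span ⟨t, rfl⟩
    · exact A.col_mem_span_of_det_submatrix_snoc_eq_zero hind (hcol j hj)
  refine A.det_submatrix_eq_zero_of_rank_lt id c
    ((A.rank_le_card_of_col_mem_span hspan).trans_lt ?_)
  simp

end Matrix

theorem eval_det_submatrix_genericMatrix {g d : ℕ} (x : Fin g × Fin (2 * d) → ℂ) {l : Type*}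
    [Fintype l] [DecidableEq l] (r : l → Fin g) (c : l → Fin (2 * d)) :
    eval x ((genericMatrix g d).submatrix r c).det =
      ((of (Function.curry x)).submatrix r c).det := by
  rw [RingHom.map_det]
  congr 1
  ext i j
  simp [genericMatrix]

theorem idealJ_le_idealI (g d : ℕ) (hgd : g ≤ 2 * d) : idealJ g d hgd ≤ idealI g d := by
  rw [idealJ, Ideal.span_le]
  rintro p ⟨i, hi, rfl⟩
  refine Ideal.subset_span ⟨_, fun a b hab => ?_, rfl⟩
  rw [Fin.lt_def] at hab
  have := a.isLt
  have := b.isLt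
  split_ifs <;> simp only [Fin.lt_def, Fin.val_castLE] <;> omega

theorem eval_eq_zero_of_mem_idealI {g d : ℕ} (hg : 0 < g) (hgd : g ≤ 2 * d)
    {x : Fin g × Fin (2 * d) → ℂ} (hJ : x ∈ zeroLocus ℂ (idealJ g d hgd))
    (hf : eval x (theF g d hgd) ≠ 0) {p : MvPolynomial (Fin g × Fin (2 * d)) ℂ}
    (hp : p ∈ idealI g d) : eval x p = 0 := by
  obtain ⟨k, rfl⟩ : ∃ k, g = k + 1 := ⟨g - 1, by omega⟩
  have hminors : ∀ c : Fin (k + 1) → Fin (2 * d),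
      ((of (Function.curry x)).submatrix id c).det = 0 := by
    refine Matrix.det_submatrix_eq_zero_of_det_submatrix_snoc_eq_zero _
      (r := (rowDelete (0 : Fin (k + 1)) : Fin k → Fin (k + 1)))
      (c₀ := fun t : Fin k => Fin.castLE (by omega) t) ?_ fun j hj => ?_
    · rw [theF, map_prod, Finset.prod_ne_zero_iff] at hf
      have h0 := hf 0 (Finset.mem_univ 0)
      rwa [eval_det_submatrix_genericMatrix] at h0
    · have hkj : k ≤ j := by
        by_contra h
        exact hj ⟨⟨j, by omega⟩, rfl⟩
      have hsnoc : Fin.snoc (fun t : Fin k => Fin.castLE (by omega) t) j =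
          fun t : Fin (k + 1) => if (t : ℕ) < k + 1 - 1 then Fin.castLE hgd t else j := by
        funext t
        refine Fin.lastCases ?_ (fun t => ?_) t <;> simp
      rw [hsnoc, ← eval_det_submatrix_genericMatrix]
      exact hJ _ (Ideal.subset_span ⟨j, hkj, rfl⟩)
  have hI : idealI (k + 1) d ≤ RingHom.ker (eval x) := by
    refine Ideal.span_le.2 ?_
    rintro _ ⟨c, -, rfl⟩
    simp [eval_det_submatrix_genericMatrix, hminors]
  exact hI hp

/-- The product ideals `J·(f)` and `I·(f)` have the same radical. -/
theorem radical_Jf_eq_radical_If (g d : ℕ) (hg : 2 ≤ g) (hgd : g ≤ 2 * d) :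
    (idealJ g d hgd * Ideal.span {theF g d hgd}).radical =
      (idealI g d * Ideal.span {theF g d hgd}).radical := by
  refine le_antisymm (Ideal.radical_mono (Ideal.mul_mono_left (idealJ_le_idealI g d hgd))) ?_
  rw [Ideal.radical_le_radical_iff, Ideal.radical_mul, mul_comm (idealI g d)]
  refine le_inf (Ideal.span_singleton_mul_le_iff.2 fun p hp => ?_)
    (Ideal.mul_le_left.trans (Ideal.le_radical))
  rw [← vanishingIdeal_zeroLocus_eq_radical (K := ℂ), mem_vanishingIdeal_iff]
  intro x hx
  rw [map_mul, mul_eq_zero, or_iff_not_imp_left]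
  exact fun hf => eval_eq_zero_of_mem_idealI (by omega) hgd hx hf hp
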